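/- Let x lie on the cone boundary C(c, c−p, ψ, E) with x in the half-space (c−p)^T E²(x−c) ≥ 0. Then the avoidance vector field u := −k·E⁻¹π⊥(E(x−c))E(x−p) has nonnegative inner product with the outward normal n(x) := E π^ψ(E(c−p)) E(x−c), i.e., u^T n(x) ≥ 0. -/

import Mathlib

open Matrix

/-- Euclidean norm of a vector, `‖v‖ = √(v ⬝ᵥ v)`. -/
noncomputable def enorm₂ {n : ℕ} (v : Fin n → ℝ) : ℝ := Real.sqrt (v ⬝ᵥ v)

/-- Orthogonal projection `π⊥(z) = I - zzᵀ/‖z‖²`. -/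
noncomputable def projPerp {n : ℕ} (z : Fin n → ℝ) : Matrix (Fin n) (Fin n) ℝ :=
  1 - (z ⬝ᵥ z)⁻¹ • vecMulVec z z

/-- Parallel projection `π∥(z) = zzᵀ/‖z‖²`. -/
noncomputable def projPar {n : ℕ} (z : Fin n → ℝ) : Matrix (Fin n) (Fin n) ℝ :=
  (z ⬝ᵥ z)⁻¹ • vecMulVec z z

/-- Parametric map `π^ψ(z) = cos²ψ·π⊥(z) − sin²ψ·π∥(z)`. -/
noncomputable def projTheta {n : ℕ} (z : Fin n → ℝ) (ψ : ℝ) : Matrix (Fin n) (Fin n) ℝ :=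
  (Real.cos ψ ^ 2) • projPerp z - (Real.sin ψ ^ 2) • projPar z

/-!
Write `a = E(x - c)` and `b = E(c - p)`, so that `E(x - p) = a + b`. Since `E` is symmetric and
invertible, `uᵀ n(x) = -k ⟪π⊥(a) b, π^ψ(b) a⟫`. Because `cos² + sin² = 1`,
`π^ψ(b) a = cos²ψ · a - (⟪b, a⟫ / ‖b‖²) · b`, and `π⊥(a) b ⟂ a`, so
`uᵀ n(x) = k (⟪b, a⟫ / ‖b‖²) ‖π⊥(a) b‖²`. The cone condition makes `⟪b, a⟫ = cos ψ ‖b‖ ‖a‖ ≥ 0`.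
-/

section Projections

variable {n : ℕ}

lemma projPar_mulVec (z w : Fin n → ℝ) : projPar z *ᵥ w = ((z ⬝ᵥ w) / (z ⬝ᵥ z)) • z := by
  rw [projPar, smul_mulVec, vecMulVec_mulVec, op_smul_eq_smul, smul_smul, inv_mul_eq_div]

lemma projPerp_mulVec (z w : Fin n → ℝ) :
    projPerp z *ᵥ w = w - ((z ⬝ᵥ w) / (z ⬝ᵥ z)) • z := by
  rw [projPerp, sub_mulVec, one_mulVec, ← projPar, projPar_mulVec]

lemma projTheta_mulVec (z w : Fin n → ℝ) (ψ : ℝ) :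
    projTheta z ψ *ᵥ w = Real.cos ψ ^ 2 • w - ((z ⬝ᵥ w) / (z ⬝ᵥ z)) • z := by
  rw [projTheta, sub_mulVec, smul_mulVec, smul_mulVec, projPerp_mulVec, projPar_mulVec]
  linear_combination (norm := module)
    (-((z ⬝ᵥ w) / (z ⬝ᵥ z))) • (Real.cos_sq_add_sin_sq ψ) • z

lemma dotProduct_projPerp_mulVec (z w : Fin n → ℝ) : z ⬝ᵥ (projPerp z *ᵥ w) = 0 := by
  rw [projPerp_mulVec, dotProduct_sub, dotProduct_smul, smul_eq_mul,
    div_mul_cancel_of_imp fun h => by simp [dotProduct_self_eq_zero.mp h], sub_self]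

lemma projPerp_mulVec_self (z : Fin n → ℝ) : projPerp z *ᵥ z = 0 := by
  rcases eq_or_ne z 0 with rfl | hz
  · exact mulVec_zero _
  · rw [projPerp_mulVec, div_self (mt dotProduct_self_eq_zero.mp hz), one_smul, sub_self]

lemma projPerp_mulVec_add_self (z w : Fin n → ℝ) : projPerp z *ᵥ (z + w) = projPerp z *ᵥ w := by
  rw [mulVec_add, projPerp_mulVec_self, zero_add]

lemma projPerp_mulVec_dotProduct_self_nonneg (z w : Fin n → ℝ) :
    0 ≤ (projPerp z *ᵥ w) ⬝ᵥ w := by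
  set v := projPerp z *ᵥ w with hv
  have hsplit : w = v + ((z ⬝ᵥ w) / (z ⬝ᵥ z)) • z := by rw [hv, projPerp_mulVec, sub_add_cancel]
  have horth : v ⬝ᵥ z = 0 := by rw [dotProduct_comm, dotProduct_projPerp_mulVec]
  rw [hsplit, dotProduct_add, dotProduct_smul, horth, smul_zero, add_zero]
  exact Finset.sum_nonneg fun i _ => mul_self_nonneg (v i)

lemma projPerp_mulVec_dotProduct_projTheta_mulVec (a b : Fin n → ℝ) (ψ : ℝ) :
    (projPerp a *ᵥ b) ⬝ᵥ (projTheta b ψ *ᵥ a)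
      = -((b ⬝ᵥ a) / (b ⬝ᵥ b) * ((projPerp a *ᵥ b) ⬝ᵥ b)) := by
  rw [projTheta_mulVec, dotProduct_sub, dotProduct_smul, dotProduct_smul,
    dotProduct_comm (projPerp a *ᵥ b) a, dotProduct_projPerp_mulVec, smul_zero, zero_sub,
    smul_eq_mul]

lemma projPerp_mulVec_dotProduct_projTheta_mulVec_nonpos {a b : Fin n → ℝ} (hab : 0 ≤ b ⬝ᵥ a)
    (ψ : ℝ) : (projPerp a *ᵥ b) ⬝ᵥ (projTheta b ψ *ᵥ a) ≤ 0 := by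
  rw [projPerp_mulVec_dotProduct_projTheta_mulVec, neg_nonpos]
  have hb : 0 ≤ b ⬝ᵥ b := Finset.sum_nonneg fun i _ => mul_self_nonneg (b i)
  exact mul_nonneg (div_nonneg hab hb) (projPerp_mulVec_dotProduct_self_nonneg a b)

end Projections

namespace Matrix.IsSymm

variable {m R : Type*} [Fintype m] [CommRing R] {E : Matrix m m R}

lemma dotProduct_mul_self_mulVec (hE : E.IsSymm) (v w : m → R) :
    v ⬝ᵥ ((E * E) *ᵥ w) = (E *ᵥ v) ⬝ᵥ (E *ᵥ w) := by
  rw [← mulVec_mulVec, dotProduct_mulVec, ← mulVec_transpose, hE.eq]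

lemma inv_mulVec_dotProduct_mulVec [DecidableEq m] (hE : E.IsSymm) (hunit : IsUnit E)
    (v w : m → R) : (E⁻¹ *ᵥ v) ⬝ᵥ (E *ᵥ w) = v ⬝ᵥ w := by
  rw [dotProduct_mulVec, ← mulVec_transpose, hE.eq, mulVec_mulVec,
    mul_nonsing_inv _ ((isUnit_iff_isUnit_det E).mp hunit), one_mulVec]

end Matrix.IsSymm

theorem avoidance_field_vs_cone_normal_general {n : ℕ} (E : Matrix (Fin n) (Fin n) ℝ)
    (hE : E.PosDef) (c p x : Fin n → ℝ) (k : ℝ) (hk : 0 ≤ k)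
    (ψ : ℝ) (hψ₀ : 0 ≤ ψ) (hψ : ψ ≤ Real.pi / 2)
    (hcone : Real.cos ψ * enorm₂ (E *ᵥ (c - p)) * enorm₂ (E *ᵥ (x - c))
      = (c - p) ⬝ᵥ ((E * E) *ᵥ (x - c)))
    (u nx : Fin n → ℝ)
    (hu : u = -(k • (E⁻¹ *ᵥ (projPerp (E *ᵥ (x - c)) *ᵥ (E *ᵥ (x - p))))))
    (hnx : nx = E *ᵥ (projTheta (E *ᵥ (c - p)) ψ *ᵥ (E *ᵥ (x - c)))) :
    0 ≤ u ⬝ᵥ nx := by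
  have hEsymm : E.IsSymm := isHermitian_iff_isSymm.mp hE.isHermitian
  have hhalf : 0 ≤ (E *ᵥ (c - p)) ⬝ᵥ (E *ᵥ (x - c)) := by
    rw [← hEsymm.dotProduct_mul_self_mulVec, ← hcone]
    have := Real.cos_nonneg_of_mem_Icc ⟨by linarith [Real.pi_pos], hψ⟩
    unfold enorm₂
    positivity
  have hsplit : E *ᵥ (x - p) = E *ᵥ (x - c) + E *ᵥ (c - p) := by
    rw [← mulVec_add, sub_add_sub_cancel]
  rw [hu, hnx, neg_dotProduct, smul_dotProduct, hEsymm.inv_mulVec_dotProduct_mulVec hE.isUnit,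
    hsplit, projPerp_mulVec_add_self, smul_eq_mul, neg_nonneg]
  exact mul_nonpos_of_nonneg_of_nonpos hk
    (projPerp_mulVec_dotProduct_projTheta_mulVec_nonpos hhalf ψ)

/-- On the cone boundary `C(c,c-p,ψ,E)`, the avoidance field has nonnegative inner
product with the normal `n(x) = E π^ψ(E(c-p)) E(x-c)`. -/
theorem avoidance_field_vs_cone_normal {n : ℕ} (E : Matrix (Fin n) (Fin n) ℝ)
    (hE : E.PosDef) (c p x : Fin n → ℝ) (hx : x ≠ c) (hp : p ≠ c) (k : ℝ) (hk : 0 ≤ k)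
    (ψ : ℝ) (hψ₀ : 0 ≤ ψ) (hψ : ψ ≤ Real.pi / 2)
    (hcone : Real.cos ψ * enorm₂ (E *ᵥ (c - p)) * enorm₂ (E *ᵥ (x - c))
      = (c - p) ⬝ᵥ ((E * E) *ᵥ (x - c)))
    (u nx : Fin n → ℝ)
    (hu : u = -(k • (E⁻¹ *ᵥ (projPerp (E *ᵥ (x - c)) *ᵥ (E *ᵥ (x - p))))))
    (hnx : nx = E *ᵥ (projTheta (E *ᵥ (c - p)) ψ *ᵥ (E *ᵥ (x - c)))) :
    0 ≤ u ⬝ᵥ nx :=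
  avoidance_field_vs_cone_normal_general E hE c p x k hk ψ hψ₀ hψ hcone u nx hu hnx
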